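/- Let C = (G, ℓ) be a tropical curve with connected graph G, and let R = (r_l)_{l ∈ L} be a real vector indexed by the leaves of G with Σ_{l ∈ L} r_l = 0. Then there exists a unique exact 1-form w_R on C whose residue at each leaf l equals r_l. -/

import Mathlib

/-- A graph in the sense of the paper: finite sets of vertices, oriented edges
(with fixed-point-free reversal involution and target map) and leaves (with
attachment map), together with a positive, reversal-invariant length function. -/
structure TropCurve where
  V : Type
  E : Type
  L : Type
  fintV : Fintype V
  fintE : Fintype E
  fintL : Fintype L
  decV : DecidableEq V
  decE : DecidableEq E
  decL : DecidableEq L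
  /-- edge reversal `e ↦ -e` -/
  rev : E → E
  rev_invol : ∀ e, rev (rev e) = e
  rev_ne : ∀ e, rev e ≠ e
  /-- target vertex of an oriented edge -/
  tgt : E → V
  /-- vertex to which a leaf is attached -/
  leafV : L → V
  /-- length function ℓ -/
  len : E → ℝ
  len_pos : ∀ e, 0 < len e
  len_rev : ∀ e, len (rev e) = len e

attribute [instance] TropCurve.fintV TropCurve.fintE TropCurve.fintL
  TropCurve.decV TropCurve.decE TropCurve.decL

namespace TropCurve

variable (C : TropCurve)

/-- The vertex `v(h)` attached to a half-edge `h ∈ E ⊔ L`. -/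
def vert : C.E ⊕ C.L → C.V := Sum.elim C.tgt C.leafV

/-- A 1-form on the tropical curve: `w(-e) = -w(e)` and the balance condition
at every vertex. -/
def IsOneForm (w : C.E ⊕ C.L → ℝ) : Prop :=
  (∀ e : C.E, w (Sum.inl (C.rev e)) = - w (Sum.inl e)) ∧
  (∀ p : C.V, ∑ h : C.E ⊕ C.L, (if C.vert h = p then w h else 0) = 0)

/-- A path: a finite sequence of oriented edges `h_1 ⋯ h_n` with
`v(h_i) = v(-h_{i+1})`. -/
def IsPath (ρ : List C.E) : Prop :=
  ∀ i : ℕ, (h : i + 1 < ρ.length) →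
    C.tgt (ρ.get ⟨i, Nat.lt_of_succ_lt h⟩) = C.tgt (C.rev (ρ.get ⟨i + 1, h⟩))

/-- A loop: a path with `v(h_n) = v(-h_1)`. -/
def IsLoop (ρ : List C.E) : Prop :=
  C.IsPath ρ ∧ ∀ h : ρ ≠ [], C.tgt (ρ.getLast h) = C.tgt (C.rev (ρ.head h))

/-- `∫_ρ w = Σ_j ℓ(h_j) w(h_j)`. -/
noncomputable def pathIntegral (ρ : List C.E) (w : C.E ⊕ C.L → ℝ) : ℝ :=
  ∑ i : Fin ρ.length, C.len (ρ.get i) * w (Sum.inl (ρ.get i))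

/-- A 1-form is exact if its integral along every loop vanishes. -/
def IsExact (w : C.E ⊕ C.L → ℝ) : Prop :=
  C.IsOneForm w ∧ ∀ ρ : List C.E, C.IsLoop ρ → C.pathIntegral ρ w = 0

/-- A 1-form is holomorphic if all its residues vanish. -/
def IsHolo (w : C.E ⊕ C.L → ℝ) : Prop :=
  C.IsOneForm w ∧ ∀ l : C.L, w (Sum.inr l) = 0

/-- Connectedness of the underlying graph. -/
def Connected : Prop :=
  ∀ p q : C.V, p = q ∨ ∃ ρ : List C.E, ∃ hne : ρ ≠ [],
    C.IsPath ρ ∧ C.tgt (C.rev (ρ.head hne)) = p ∧ C.tgt (ρ.getLast hne) = q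

/-- A simple loop: a nonempty loop whose underlying unoriented edges are
pairwise distinct. -/
def IsSimpleLoop (ρ : List C.E) : Prop :=
  C.IsLoop ρ ∧ ρ ≠ [] ∧ List.Pairwise (fun e e' => e ≠ e' ∧ e ≠ C.rev e') ρ

/-- The dual function `w^ρ` of a loop `ρ`. -/
noncomputable def dualForm (ρ : List C.E) : C.E ⊕ C.L → ℝ :=
  fun h => match h with
  | Sum.inl e => if e ∈ ρ then 1 else if C.rev e ∈ ρ then -1 else 0
  | Sum.inr _ => 0

/-- A simple path from the leaf `l₁` to the leaf `l₂`. -/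
def IsSimplePathBetween (ρ : List C.E) (l₁ l₂ : C.L) : Prop :=
  C.IsPath ρ ∧ List.Pairwise (fun e e' => e ≠ e' ∧ e ≠ C.rev e') ρ ∧
  (∀ hne : ρ ≠ [],
    C.tgt (C.rev (ρ.head hne)) = C.leafV l₁ ∧ C.tgt (ρ.getLast hne) = C.leafV l₂) ∧
  (ρ = [] → C.leafV l₁ = C.leafV l₂)

/-- The dual function `w^ρ` of a simple path `ρ` from `l₁` to `l₂`. -/
noncomputable def dualPathForm (ρ : List C.E) (l₁ l₂ : C.L) : C.E ⊕ C.L → ℝ :=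
  fun h => match h with
  | Sum.inl e => if e ∈ ρ then 1 else if C.rev e ∈ ρ then -1 else 0
  | Sum.inr l => if l = l₁ then 1 else if l = l₂ then -1 else 0

/-- The edge pairing `⟨w, w'⟩ = (1/2) Σ_{e ∈ E} ℓ(e) w(e) w'(e)`. -/
noncomputable def pairing (w w' : C.E ⊕ C.L → ℝ) : ℝ :=
  (1 / 2) * ∑ e : C.E, C.len e * w (Sum.inl e) * w' (Sum.inl e)

/-- The space `Ω(C)` of 1-forms, as a submodule of the functions on `E ⊔ L`. -/
noncomputable def Omega : Submodule ℝ (C.E ⊕ C.L → ℝ) where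
  carrier := {w | C.IsOneForm w}
  zero_mem' := by
    refine ⟨fun e => by simp, fun p => ?_⟩
    simp
  add_mem' := by
    rintro a b ⟨ha1, ha2⟩ ⟨hb1, hb2⟩
    refine ⟨fun e => ?_, fun p => ?_⟩
    · have h1 := ha1 e
      have h2 := hb1 e
      simp only [Pi.add_apply] at h1 h2 ⊢
      linarith
    · have : (∑ h : C.E ⊕ C.L, if C.vert h = p then (a + b) h else 0)
          = (∑ h : C.E ⊕ C.L, if C.vert h = p then a h else 0)
            + (∑ h : C.E ⊕ C.L, if C.vert h = p then b h else 0) := by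
        rw [← Finset.sum_add_distrib]
        refine Finset.sum_congr rfl fun h _ => ?_
        by_cases hh : C.vert h = p <;> simp [hh]
      rw [this, ha2 p, hb2 p, add_zero]
  smul_mem' := by
    rintro c a ⟨ha1, ha2⟩
    refine ⟨fun e => ?_, fun p => ?_⟩
    · have h1 := ha1 e
      simp only [Pi.smul_apply, smul_eq_mul] at h1 ⊢
      rw [h1]; ring
    · have : (∑ h : C.E ⊕ C.L, if C.vert h = p then (c • a) h else 0)
          = c * (∑ h : C.E ⊕ C.L, if C.vert h = p then a h else 0) := by
        rw [Finset.mul_sum]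
        refine Finset.sum_congr rfl fun h _ => ?_
        by_cases hh : C.vert h = p <;> simp [hh]
      rw [this, ha2 p, mul_zero]

lemma pathIntegral_add (ρ : List C.E) (a b : C.E ⊕ C.L → ℝ) :
    C.pathIntegral ρ (a + b) = C.pathIntegral ρ a + C.pathIntegral ρ b := by
  simp [pathIntegral, ← Finset.sum_add_distrib, mul_add]

lemma pathIntegral_smul (ρ : List C.E) (c : ℝ) (a : C.E ⊕ C.L → ℝ) :
    C.pathIntegral ρ (c • a) = c * C.pathIntegral ρ a := by
  simp [pathIntegral, Finset.mul_sum]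
  refine Finset.sum_congr rfl fun i _ => by ring

/-- The space `Ω_0(C)` of exact 1-forms. -/
noncomputable def Omega0 : Submodule ℝ (C.E ⊕ C.L → ℝ) where
  carrier := {w | C.IsExact w}
  zero_mem' := by
    refine ⟨(C.Omega).zero_mem, fun ρ _ => ?_⟩
    simp [pathIntegral]
  add_mem' := by
    rintro a b ⟨ha1, ha2⟩ ⟨hb1, hb2⟩
    exact ⟨(C.Omega).add_mem ha1 hb1,
      fun ρ hρ => by rw [C.pathIntegral_add, ha2 ρ hρ, hb2 ρ hρ, add_zero]⟩
  smul_mem' := by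
    rintro c a ⟨ha1, ha2⟩
    exact ⟨(C.Omega).smul_mem c ha1,
      fun ρ hρ => by rw [C.pathIntegral_smul, ha2 ρ hρ, mul_zero]⟩

/-- The space `Ω_H(C)` of holomorphic 1-forms. -/
noncomputable def OmegaH : Submodule ℝ (C.E ⊕ C.L → ℝ) where
  carrier := {w | C.IsHolo w}
  zero_mem' := ⟨(C.Omega).zero_mem, fun l => rfl⟩
  add_mem' := by
    rintro a b ⟨ha1, ha2⟩ ⟨hb1, hb2⟩
    exact ⟨(C.Omega).add_mem ha1 hb1,
      fun l => by simp [Pi.add_apply, ha2 l, hb2 l]⟩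
  smul_mem' := by
    rintro c a ⟨ha1, ha2⟩
    exact ⟨(C.Omega).smul_mem c ha1,
      fun l => by simp [Pi.smul_apply, ha2 l]⟩

end TropCurve

-- AUX START
namespace TropCurve

variable (C : TropCurve)

/-- Reindexing a sum over edges by the reversal involution. -/
lemma sum_rev (F : C.E → ℝ) : ∑ e, F (C.rev e) = ∑ e, F e :=
  Fintype.sum_bijective C.rev (Function.Involutive.bijective C.rev_invol) _ _ (fun _ => rfl)

lemma sum_antisym (F : C.E → ℝ) (h : ∀ e, F (C.rev e) = -F e) : ∑ e, F e = 0 := by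
  have h1 : ∑ e, F e = ∑ e, F (C.rev e) := (C.sum_rev F).symm
  have h2 : ∑ e, F (C.rev e) = -∑ e, F e := by
    rw [← Finset.sum_neg_distrib]
    exact Finset.sum_congr rfl fun e _ => h e
  linarith

/-- Walks from `p` to `q` with given edge list. -/
inductive W : C.V → C.V → List C.E → Prop
  | nil (p : C.V) : W p p []
  | cons (e : C.E) {q : C.V} {ρ : List C.E} : W (C.tgt e) q ρ → W (C.tgt (C.rev e)) q (e :: ρ)

variable {C}

lemma W.src_eq {p q : C.V} {e : C.E} {ρ : List C.E} (h : C.W p q (e :: ρ)) :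
    p = C.tgt (C.rev e) := by cases h; rfl

lemma W.nil_eq {p q : C.V} (h : C.W p q []) : p = q := by cases h; rfl

lemma W.chain' {p q : C.V} {ρ : List C.E} (h : C.W p q ρ) :
    List.Chain' (fun e e' => C.tgt e = C.tgt (C.rev e')) ρ := by
  induction h with
  | nil => exact List.isChain_nil
  | cons e hw ih =>
    rename_i q ρ
    rw [List.Chain', List.isChain_cons]
    refine ⟨?_, ih⟩
    intro y hy
    cases ρ with
    | nil => simp at hy
    | cons e' ρ' =>
      simp only [List.head?_cons, Option.mem_some_iff] at hy
      subst hy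
      exact hw.src_eq

lemma isPath_of_chain' {ρ : List C.E}
    (h : List.Chain' (fun e e' => C.tgt e = C.tgt (C.rev e')) ρ) : C.IsPath ρ := by
  intro i hi
  exact List.isChain_iff_getElem.mp h i (by omega)

lemma W.isPath {p q : C.V} {ρ : List C.E} (h : C.W p q ρ) : C.IsPath ρ :=
  isPath_of_chain' h.chain'

lemma W.last'_eq {p q : C.V} {ρ : List C.E} (h : C.W p q ρ) :
    ∀ e ∈ ρ.getLast?, C.tgt e = q := by
  induction h with
  | nil => intro e he; simp at he
  | cons e hw ih =>
    rename_i q ρ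
    intro e' he'
    cases ρ with
    | nil =>
      simp only [List.getLast?_singleton, Option.mem_some_iff] at he'
      subst he'
      exact hw.nil_eq
    | cons a l =>
      rw [List.getLast?_cons_cons] at he'
      exact ih e' he'

lemma W.last_eq {p q : C.V} {ρ : List C.E} (h : C.W p q ρ) (hne : ρ ≠ []) :
    C.tgt (ρ.getLast hne) = q :=
  h.last'_eq _ (List.getLast?_eq_getLast hne ▸ rfl)

lemma W.head_eq {p q : C.V} {ρ : List C.E} (h : C.W p q ρ) (hne : ρ ≠ []) :
    C.tgt (C.rev (ρ.head hne)) = p := by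
  cases ρ with
  | nil => exact absurd rfl hne
  | cons e ρ' => rw [List.head_cons, ← h.src_eq]

lemma W.isLoop {p : C.V} {ρ : List C.E} (h : C.W p p ρ) : C.IsLoop ρ :=
  ⟨h.isPath, fun hne => by rw [h.last_eq hne, h.head_eq hne]⟩

lemma W.append {p q r : C.V} {ρ₁ ρ₂ : List C.E} (h₁ : C.W p q ρ₁) (h₂ : C.W q r ρ₂) :
    C.W p r (ρ₁ ++ ρ₂) := by
  induction h₁ with
  | nil => simpa using h₂
  | cons e hw ih => exact W.cons e (ih h₂)

lemma W.single (e : C.E) : C.W (C.tgt (C.rev e)) (C.tgt e) [e] := W.cons e (W.nil _)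

lemma W.reverse {p q : C.V} {ρ : List C.E} (h : C.W p q ρ) :
    C.W q p (ρ.reverse.map C.rev) := by
  induction h with
  | nil => exact W.nil _
  | cons e hw ih =>
    rename_i q ρ
    have h1 : C.W (C.tgt e) (C.tgt (C.rev e)) [C.rev e] := by
      have := W.single (C := C) (C.rev e)
      rwa [C.rev_invol] at this
    have := ih.append h1
    simpa using this

lemma exists_W_of_path {ρ : List C.E} (e : C.E) (h : C.IsPath (e :: ρ)) :
    ∃ q, C.W (C.tgt (C.rev e)) q (e :: ρ) := by
  induction ρ generalizing e with
  | nil => exact ⟨C.tgt e, W.single e⟩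
  | cons e' ρ' ih =>
    have htail : C.IsPath (e' :: ρ') := by
      intro i hi
      have := h (i+1) (by simpa using hi)
      simpa using this
    have hlink : C.tgt e = C.tgt (C.rev e') := by
      have := h 0 (by simp)
      simpa using this
    obtain ⟨q, hw⟩ := ih e' htail
    rw [← hlink] at hw
    exact ⟨q, W.cons e hw⟩

lemma exists_walk (hconn : C.Connected) (p q : C.V) : ∃ ρ, C.W p q ρ := by
  rcases hconn p q with h | ⟨ρ, hne, hpath, hp, hq⟩
  · exact ⟨[], h ▸ W.nil p⟩
  · cases ρ with
    | nil => exact absurd rfl hne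
    | cons e ρ' =>
      obtain ⟨q', hw⟩ := exists_W_of_path e hpath
      have h1 : C.tgt (C.rev e) = p := by simpa using hp
      have h2 : q' = q := by rw [← hq, hw.last_eq hne]
      exact ⟨e :: ρ', h1 ▸ h2 ▸ hw⟩

variable (C)

lemma pathIntegral_nil (w : C.E ⊕ C.L → ℝ) : C.pathIntegral [] w = 0 := by
  simp [pathIntegral]

lemma pathIntegral_cons (e : C.E) (ρ : List C.E) (w : C.E ⊕ C.L → ℝ) :
    C.pathIntegral (e :: ρ) w = C.len e * w (Sum.inl e) + C.pathIntegral ρ w := by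
  simp [pathIntegral, Fin.sum_univ_succ]

lemma pathIntegral_append (ρ₁ ρ₂ : List C.E) (w : C.E ⊕ C.L → ℝ) :
    C.pathIntegral (ρ₁ ++ ρ₂) w = C.pathIntegral ρ₁ w + C.pathIntegral ρ₂ w := by
  induction ρ₁ with
  | nil => rw [List.nil_append, pathIntegral_nil]; ring
  | cons e ρ ih =>
    rw [List.cons_append, pathIntegral_cons, pathIntegral_cons, ih]; ring

lemma pathIntegral_revrev (ρ : List C.E) (w : C.E ⊕ C.L → ℝ)
    (hw : ∀ e : C.E, w (Sum.inl (C.rev e)) = - w (Sum.inl e)) :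
    C.pathIntegral (ρ.reverse.map C.rev) w = - C.pathIntegral ρ w := by
  induction ρ with
  | nil => simp [pathIntegral_nil]
  | cons e ρ' ih =>
    simp only [List.reverse_cons, List.map_append, List.map_cons, List.map_nil]
    rw [pathIntegral_append, ih, pathIntegral_cons, pathIntegral_cons, pathIntegral_nil,
      C.len_rev, hw]
    ring

variable {C}

lemma W.telescope {g : C.V → ℝ} {w : C.E ⊕ C.L → ℝ}
    (hw : ∀ e : C.E, C.len e * w (Sum.inl e) = g (C.tgt e) - g (C.tgt (C.rev e)))
    {p q : C.V} {ρ : List C.E} (h : C.W p q ρ) :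
    C.pathIntegral ρ w = g q - g p := by
  induction h with
  | nil => simp [pathIntegral_nil]
  | cons e hw' ih =>
    rw [C.pathIntegral_cons, ih, hw e]
    ring

end TropCurve
-- AUX END

-- AUX2 START
namespace TropCurve

variable (C : TropCurve)

/-- The weighted graph Laplacian. -/
noncomputable def lap : (C.V → ℝ) →ₗ[ℝ] (C.V → ℝ) where
  toFun f := fun p => ∑ e, if C.tgt e = p then (f (C.tgt e) - f (C.tgt (C.rev e))) / C.len e else 0
  map_add' f g := by
    funext p
    rw [Pi.add_apply, ← Finset.sum_add_distrib]
    refine Finset.sum_congr rfl fun e _ => ?_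
    by_cases h : C.tgt e = p
    · simp only [h, if_true, Pi.add_apply]; ring
    · simp [h]
  map_smul' c f := by
    funext p
    simp only [RingHom.id_apply, Pi.smul_apply, smul_eq_mul, Finset.mul_sum]
    refine Finset.sum_congr rfl fun e _ => ?_
    by_cases h : C.tgt e = p
    · simp only [h, if_true, Pi.smul_apply, smul_eq_mul]; ring
    · simp [h]

/-- The summation functional. -/
noncomputable def sumL : (C.V → ℝ) →ₗ[ℝ] ℝ where
  toFun f := ∑ p, f p
  map_add' f g := Finset.sum_add_distrib
  map_smul' c f := by simp [Finset.mul_sum]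

lemma lap_apply (f : C.V → ℝ) (p : C.V) :
    C.lap f p = ∑ e, if C.tgt e = p then (f (C.tgt e) - f (C.tgt (C.rev e))) / C.len e else 0 :=
  rfl

lemma sum_ite_tgt (c : C.V → ℝ) (u : C.E → ℝ) (e : C.E) :
    ∑ p, (if C.tgt e = p then c p * u e else 0) = c (C.tgt e) * u e := by
  rw [Finset.sum_ite_eq]
  simp

lemma sum_lap (f : C.V → ℝ) : C.sumL (C.lap f) = 0 := by
  show ∑ p, C.lap f p = 0
  simp only [lap_apply]
  rw [Finset.sum_comm]
  have h1 : ∀ e : C.E, ∑ p, (if C.tgt e = p then (f (C.tgt e) - f (C.tgt (C.rev e))) / C.len e else 0)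
      = (f (C.tgt e) - f (C.tgt (C.rev e))) / C.len e := by
    intro e
    rw [Finset.sum_ite_eq]
    simp
  rw [Finset.sum_congr rfl fun e _ => h1 e]
  apply C.sum_antisym
  intro e
  rw [C.rev_invol, C.len_rev]
  ring

lemma lap_one : C.lap (fun _ => 1) = 0 := by
  funext p
  rw [lap_apply]
  refine Finset.sum_eq_zero fun e _ => ?_
  by_cases h : C.tgt e = p <;> simp [h]

variable {C}

lemma W.const {f : C.V → ℝ} (hf : ∀ e : C.E, f (C.tgt e) = f (C.tgt (C.rev e)))
    {p q : C.V} {ρ : List C.E} (h : C.W p q ρ) : f p = f q := by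
  induction h with
  | nil => rfl
  | cons e hw ih => rw [← hf e]; exact ih

lemma lap_diag {f : C.V → ℝ} (hf : C.lap f = 0) :
    ∀ e : C.E, f (C.tgt e) = f (C.tgt (C.rev e)) := by
  have hT : ∑ e, f (C.tgt e) * ((f (C.tgt e) - f (C.tgt (C.rev e))) / C.len e) = 0 := by
    have h0 : ∑ p, f p * C.lap f p = 0 := Finset.sum_eq_zero fun p _ => by rw [hf]; simp
    calc ∑ e, f (C.tgt e) * ((f (C.tgt e) - f (C.tgt (C.rev e))) / C.len e)
        = ∑ e, ∑ p, (if C.tgt e = p then f p * ((f (C.tgt e) - f (C.tgt (C.rev e))) / C.len e) else 0) := by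
          refine Finset.sum_congr rfl fun e _ => ?_
          exact (C.sum_ite_tgt f (fun e => (f (C.tgt e) - f (C.tgt (C.rev e))) / C.len e) e).symm
      _ = ∑ p, ∑ e, (if C.tgt e = p then f p * ((f (C.tgt e) - f (C.tgt (C.rev e))) / C.len e) else 0) :=
          Finset.sum_comm
      _ = ∑ p, f p * C.lap f p := by
          refine Finset.sum_congr rfl fun p _ => ?_
          rw [lap_apply, Finset.mul_sum]
          refine Finset.sum_congr rfl fun e _ => ?_
          by_cases h : C.tgt e = p
          · simp [h]
          · simp [h]
      _ = 0 := h0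
  have hU : ∑ e, f (C.tgt (C.rev e)) * ((f (C.tgt e) - f (C.tgt (C.rev e))) / C.len e) = -
      ∑ e, f (C.tgt e) * ((f (C.tgt e) - f (C.tgt (C.rev e))) / C.len e) := by
    rw [← C.sum_rev (fun e => f (C.tgt (C.rev e)) * ((f (C.tgt e) - f (C.tgt (C.rev e))) / C.len e)),
      ← Finset.sum_neg_distrib]
    refine Finset.sum_congr rfl fun e _ => ?_
    rw [C.rev_invol, C.len_rev]
    ring
  have hsq : ∑ e, (f (C.tgt e) - f (C.tgt (C.rev e)))^2 / C.len e = 0 := by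
    have : ∑ e, (f (C.tgt e) - f (C.tgt (C.rev e)))^2 / C.len e
        = ∑ e, (f (C.tgt e) * ((f (C.tgt e) - f (C.tgt (C.rev e))) / C.len e)
            - f (C.tgt (C.rev e)) * ((f (C.tgt e) - f (C.tgt (C.rev e))) / C.len e)) := by
      refine Finset.sum_congr rfl fun e _ => ?_
      ring
    rw [this, Finset.sum_sub_distrib, hT, hU, hT]
    ring
  intro e
  have hnn : ∀ e ∈ Finset.univ, (0:ℝ) ≤ (f (C.tgt e) - f (C.tgt (C.rev e)))^2 / C.len e :=
    fun e _ => div_nonneg (sq_nonneg _) (C.len_pos e).le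
  have hdz := (Finset.sum_eq_zero_iff_of_nonneg hnn).mp hsq e (Finset.mem_univ e)
  rcases div_eq_zero_iff.mp hdz with h | h
  · have := (pow_eq_zero_iff two_ne_zero).mp h
    linarith
  · exact absurd h (C.len_pos e).ne'

variable (C)

lemma range_lap_eq (hconn : C.Connected) [Nonempty C.V] :
    LinearMap.range C.lap = LinearMap.ker C.sumL := by
  have hle : LinearMap.range C.lap ≤ LinearMap.ker C.sumL := by
    rintro _ ⟨f, rfl⟩
    exact C.sum_lap f
  have hker : LinearMap.ker C.lap = Submodule.span ℝ {(fun _ => (1:ℝ) : C.V → ℝ)} := by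
    apply le_antisymm
    · intro f hf
      have hdiag := lap_diag (LinearMap.mem_ker.mp hf)
      obtain ⟨p₀⟩ := ‹Nonempty C.V›
      have hconst : ∀ p, f p = f p₀ := by
        intro p
        obtain ⟨ρ, hw⟩ := exists_walk hconn p p₀
        exact hw.const hdiag
      have : f = f p₀ • (fun _ => (1:ℝ)) := by
        funext p; simp [hconst p]
      rw [this]
      exact Submodule.smul_mem _ _ (Submodule.mem_span_singleton_self _)
    · rw [Submodule.span_singleton_le_iff_mem, LinearMap.mem_ker]
      exact C.lap_one
  have hone : (fun _ => (1:ℝ) : C.V → ℝ) ≠ 0 := by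
    intro h
    have := congrFun h (Classical.arbitrary C.V)
    norm_num at this
  have hkerrank : Module.finrank ℝ (LinearMap.ker C.lap) = 1 := by
    rw [hker]; exact finrank_span_singleton hone
  have htot : Module.finrank ℝ (C.V → ℝ) = Fintype.card C.V :=
    Module.finrank_fintype_fun_eq_card ℝ
  have hrange : Module.finrank ℝ (LinearMap.range C.lap) = Fintype.card C.V - 1 := by
    have := LinearMap.finrank_range_add_finrank_ker C.lap
    rw [hkerrank, htot] at this
    omega
  have hsumLtop : LinearMap.range C.sumL = ⊤ := by
    rw [LinearMap.range_eq_top]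
    intro c
    refine ⟨fun _ => c / Fintype.card C.V, ?_⟩
    show ∑ _p : C.V, c / (Fintype.card C.V : ℝ) = c
    rw [Finset.sum_const, Finset.card_univ, nsmul_eq_mul]
    have : (Fintype.card C.V : ℝ) ≠ 0 := by
      simp [Fintype.card_ne_zero]
    field_simp
  have hkerS : Module.finrank ℝ (LinearMap.ker C.sumL) = Fintype.card C.V - 1 := by
    have := LinearMap.finrank_range_add_finrank_ker C.sumL
    rw [hsumLtop, htot] at this
    simp only [finrank_top, Module.finrank_self] at this
    have hcard : 1 ≤ Fintype.card C.V := Fintype.card_pos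
    omega
  exact Submodule.eq_of_le_of_finrank_le hle (by rw [hrange, hkerS])

end TropCurve
-- AUX2 END

/-- For a tropical curve `C = (G, ℓ)` with connected graph `G`
and a real vector `R = (r_l)_{l ∈ L}` with `Σ_l r_l = 0`, there exists a unique
exact 1-form `w_R` on `C` whose residue at each leaf `l` equals `r_l`. -/
theorem existsUnique_exact_oneForm_with_residues (C : TropCurve) (hconn : C.Connected)
    (r : C.L → ℝ) (hr : ∑ l : C.L, r l = 0) :
    ∃! w : C.E ⊕ C.L → ℝ, C.IsExact w ∧ ∀ l : C.L, w (Sum.inr l) = r l := by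
  open TropCurve in
  by_cases hV : Nonempty C.V
  case neg =>
    haveI : IsEmpty C.V := not_nonempty_iff.mp hV
    haveI hE : IsEmpty C.E := ⟨fun e => IsEmpty.false (C.tgt e)⟩
    haveI hL : IsEmpty C.L := ⟨fun l => IsEmpty.false (C.leafV l)⟩
    refine ⟨0, ⟨⟨⟨fun e => isEmptyElim e, fun p => isEmptyElim p⟩,
      fun ρ _ => ?_⟩, fun l => isEmptyElim l⟩, fun w' _ => funext fun h => ?_⟩
    · cases ρ with
      | nil => exact C.pathIntegral_nil 0
      | cons e _ => exact isEmptyElim e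
    · cases h with
      | inl e => exact isEmptyElim e
      | inr l => exact isEmptyElim l
  case pos =>
  haveI := hV
  obtain ⟨p₀⟩ := hV
  -- existence: solve the Laplace equation
  set b : C.V → ℝ := fun p => -∑ l, if C.leafV l = p then r l else 0 with hb
  have hbker : b ∈ LinearMap.ker C.sumL := by
    rw [LinearMap.mem_ker]
    show ∑ p, b p = 0
    have hcomm : ∑ p, ∑ l, (if C.leafV l = p then r l else 0) = ∑ l, r l := by
      rw [Finset.sum_comm]
      refine Finset.sum_congr rfl fun l _ => ?_
      rw [Finset.sum_ite_eq]
      simp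
    simp only [hb]
    rw [Finset.sum_neg_distrib, hcomm, hr, neg_zero]
  have hbrange : b ∈ LinearMap.range C.lap := by
    rw [C.range_lap_eq hconn]; exact hbker
  obtain ⟨f, hf⟩ := LinearMap.mem_range.mp hbrange
  set w : C.E ⊕ C.L → ℝ :=
    Sum.elim (fun e => (f (C.tgt e) - f (C.tgt (C.rev e))) / C.len e) r with hwdef
  have hanti : ∀ e, w (Sum.inl (C.rev e)) = - w (Sum.inl e) := by
    intro e
    simp only [hwdef, Sum.elim_inl]
    rw [C.rev_invol, C.len_rev]
    ring
  have hpot : ∀ e, C.len e * w (Sum.inl e) = f (C.tgt e) - f (C.tgt (C.rev e)) := by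
    intro e
    simp only [hwdef, Sum.elim_inl]
    field_simp
    exact mul_div_cancel_left₀ _ (C.len_pos e).ne'
  have hform : C.IsOneForm w := by
    refine ⟨hanti, fun p => ?_⟩
    rw [Fintype.sum_sum_type]
    have h1 : ∑ e : C.E, (if C.vert (Sum.inl e) = p then w (Sum.inl e) else 0) = C.lap f p := by
      rw [lap_apply]
      refine Finset.sum_congr rfl fun e _ => ?_
      simp only [vert, Sum.elim_inl, hwdef]
    have h2 : ∑ l : C.L, (if C.vert (Sum.inr l) = p then w (Sum.inr l) else 0) = -b p := by
      simp only [hb, neg_neg]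
      refine Finset.sum_congr rfl fun l _ => ?_
      simp only [vert, Sum.elim_inr, hwdef]
    rw [h1, h2, show C.lap f p = b p from congrFun hf p]
    ring
  have hexact : ∀ ρ, C.IsLoop ρ → C.pathIntegral ρ w = 0 := by
    intro ρ hρ
    cases ρ with
    | nil => exact C.pathIntegral_nil w
    | cons e ρ' =>
      obtain ⟨q, hw'⟩ := exists_W_of_path e hρ.1
      have hq : q = C.tgt (C.rev e) := by
        have h1 := hw'.last_eq (by simp)
        have h2 := hρ.2 (by simp)
        rw [← h1, h2]
        simp
      subst hq
      rw [W.telescope hpot hw', sub_self]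
  refine ⟨w, ⟨⟨hform, hexact⟩, fun l => rfl⟩, ?_⟩
  -- uniqueness
  rintro w' ⟨⟨⟨hanti', hbal'⟩, hloop'⟩, hres'⟩
  set u : C.E ⊕ C.L → ℝ := fun h => w' h - w h with hu
  have huanti : ∀ e, u (Sum.inl (C.rev e)) = -u (Sum.inl e) := by
    intro e
    simp only [hu]
    rw [hanti' e, hanti e]
    ring
  have hures : ∀ l, u (Sum.inr l) = 0 := by
    intro l
    simp only [hu, hres' l, hwdef, Sum.elim_inr, sub_self]
  have hubal : ∀ p, ∑ e : C.E, (if C.tgt e = p then u (Sum.inl e) else 0) = 0 := by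
    intro p
    have h1 := hform.2 p
    have h2 := hbal' p
    rw [Fintype.sum_sum_type] at h1 h2
    have hleaf : ∑ l : C.L, (if C.vert (Sum.inr l) = p then w' (Sum.inr l) else 0)
        = ∑ l : C.L, (if C.vert (Sum.inr l) = p then w (Sum.inr l) else 0) := by
      refine Finset.sum_congr rfl fun l _ => ?_
      rw [hres' l]
      rfl
    have hsplit : ∑ e : C.E, (if C.vert (Sum.inl e) = p then u (Sum.inl e) else 0)
        = ∑ e : C.E, (if C.vert (Sum.inl e) = p then w' (Sum.inl e) else 0)
          - ∑ e : C.E, (if C.vert (Sum.inl e) = p then w (Sum.inl e) else 0) := by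
      rw [← Finset.sum_sub_distrib]
      refine Finset.sum_congr rfl fun e _ => ?_
      by_cases h : C.vert (Sum.inl e) = p
      · simp [h, hu]
      · simp [h]
    have hz : ∑ e : C.E, (if C.vert (Sum.inl e) = p then u (Sum.inl e) else 0) = 0 := by
      rw [hsplit]
      rw [hleaf] at h2
      linarith
    exact hz
  have huloop : ∀ ρ, C.IsLoop ρ → C.pathIntegral ρ u = 0 := by
    intro ρ hρ
    have hdiff : C.pathIntegral ρ u = C.pathIntegral ρ w' - C.pathIntegral ρ w := by
      unfold pathIntegral
      rw [← Finset.sum_sub_distrib]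
      refine Finset.sum_congr rfl fun i _ => ?_
      simp only [hu]
      ring
    rw [hdiff, hloop' ρ hρ, hexact ρ hρ, sub_self]
  have hwalk : ∀ p, ∃ ρ, C.W p₀ p ρ := fun p => exists_walk hconn p₀ p
  set g : C.V → ℝ := fun p => C.pathIntegral (hwalk p).choose u with hg
  have hgw : ∀ p, C.W p₀ p (hwalk p).choose := fun p => (hwalk p).choose_spec
  have hkey : ∀ e, C.len e * u (Sum.inl e) = g (C.tgt e) - g (C.tgt (C.rev e)) := by
    intro e
    have hwa := hgw (C.tgt (C.rev e))
    have hwb := hgw (C.tgt e)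
    have hloopW : C.W p₀ p₀ ((hwalk (C.tgt (C.rev e))).choose ++
        e :: ((hwalk (C.tgt e)).choose.reverse.map C.rev)) :=
      hwa.append (W.cons e hwb.reverse)
    have hz := huloop _ hloopW.isLoop
    rw [C.pathIntegral_append, C.pathIntegral_cons,
      C.pathIntegral_revrev _ _ huanti] at hz
    simp only [hg]
    linarith
  have hS : ∑ e, g (C.tgt e) * u (Sum.inl e) = 0 := by
    calc ∑ e, g (C.tgt e) * u (Sum.inl e)
        = ∑ e, ∑ p, (if C.tgt e = p then g p * u (Sum.inl e) else 0) := by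
          exact Finset.sum_congr rfl fun e _ =>
            (C.sum_ite_tgt g (fun e => u (Sum.inl e)) e).symm
      _ = ∑ p, ∑ e, (if C.tgt e = p then g p * u (Sum.inl e) else 0) := Finset.sum_comm
      _ = ∑ p, g p * ∑ e, (if C.tgt e = p then u (Sum.inl e) else 0) := by
          refine Finset.sum_congr rfl fun p _ => ?_
          rw [Finset.mul_sum]
          refine Finset.sum_congr rfl fun e _ => ?_
          by_cases h : C.tgt e = p
          · simp [h]
          · simp [h]
      _ = 0 := Finset.sum_eq_zero fun p _ => by rw [hubal p, mul_zero]
  have hsq : ∑ e, C.len e * (u (Sum.inl e))^2 = 0 := by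
    have step : ∀ e : C.E, C.len e * (u (Sum.inl e))^2
        = g (C.tgt e) * u (Sum.inl e) - g (C.tgt (C.rev e)) * u (Sum.inl e) := by
      intro e
      have hk := hkey e
      linear_combination u (Sum.inl e) * hk
    rw [Finset.sum_congr rfl fun e _ => step e, Finset.sum_sub_distrib, hS]
    have hneg : ∑ e, g (C.tgt (C.rev e)) * u (Sum.inl e)
        = -∑ e, g (C.tgt e) * u (Sum.inl e) := by
      rw [← C.sum_rev (fun e => g (C.tgt (C.rev e)) * u (Sum.inl e)), ← Finset.sum_neg_distrib]
      refine Finset.sum_congr rfl fun e _ => ?_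
      rw [C.rev_invol, huanti e]
      ring
    rw [hneg, hS]
    ring
  have huz : ∀ e, u (Sum.inl e) = 0 := by
    intro e
    have hnn : ∀ e ∈ Finset.univ, (0:ℝ) ≤ C.len e * (u (Sum.inl e))^2 :=
      fun e _ => mul_nonneg (C.len_pos e).le (sq_nonneg _)
    have h0 := (Finset.sum_eq_zero_iff_of_nonneg hnn).mp hsq e (Finset.mem_univ e)
    rcases mul_eq_zero.mp h0 with h | h
    · exact absurd h (C.len_pos e).ne'
    · exact (pow_eq_zero_iff two_ne_zero).mp h
  funext h
  cases h with
  | inl e =>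
    have := huz e
    simp only [hu] at this
    linarith
  | inr l =>
    have := hures l
    simp only [hu] at this
    linarith
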